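/- arXiv:1401.7360 — 2 statements merged into one kernel-verified Lean document; each statement's English description precedes it below -/
import Mathlib

section
/- In the ring protocol for modular summation, party P₃'s view (Z, Z+X₁+⋯+X_{m-1} mod m) together with X_m reveals no more about (X₁,…,X_{m-1}) than the sum S=X₁+⋯+X_m does: H(X₁,…,X_{m-1} | Z, Z+X₁+⋯+X_{m-1} mod m, X_m) = H(X₁,…,X_{m-1} | S, X_m). -/
open MeasureTheory ProbabilityTheory Real Filter

/-!
Write `V = (X₁, …, X_{m-1})`, `M = X₁ + ⋯ + X_{m-1} mod m` and `L = X_m`. Since `Z` is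
independent of the bits, `(Z, Z + M, L)` carries exactly the information of the pair
`((M, L), Z)`, and adjoining independent noise to the conditioning variable does not change
conditional entropy; so the left side is `H(V | M, L)`. Because `M` is a sum of fewer than `m`
bits, no reduction mod `m` happens, so `(M, L)` and `(S, L) = (M + L, L)` determine each other
and the right side is `H(V | M, L)` as well.
-/

/-- Shannon entropy (in bits) of a discrete random variable. -/
noncomputable def ent {Ω : Type*} [MeasurableSpace Ω] (μ : Measure Ω)
    {S : Type*} (X : Ω → S) : ℝ :=
  (∑' s : S, Real.negMulLog (μ (X ⁻¹' {s})).toReal) / Real.log 2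

/-- Conditional Shannon entropy `H(X|Y) = H(X,Y) - H(Y)`, in bits. -/
noncomputable def condEnt {Ω : Type*} [MeasurableSpace Ω] (μ : Measure Ω)
    {S T : Type*} (X : Ω → S) (Y : Ω → T) : ℝ :=
  ent μ (fun ω => (X ω, Y ω)) - ent μ Y

section Entropy

variable {Ω : Type*} [MeasurableSpace Ω] (μ : Measure Ω) {S T U : Type*}

theorem ent_comp_of_injective (W : Ω → S) {f : S → T} (hf : f.Injective) :
    ent μ (f ∘ W) = ent μ W := by
  unfold ent
  congr 1
  have hsupp : Function.support (fun t => negMulLog (μ ((f ∘ W) ⁻¹' {t})).toReal) ⊆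
      Set.range f := by
    intro t ht
    by_contra hr
    have : (f ∘ W) ⁻¹' {t} = ∅ :=
      Set.eq_empty_of_forall_notMem fun ω hω => hr ⟨W ω, hω⟩
    simp [this] at ht
  rw [← hf.tsum_eq hsupp]
  simp only [Set.preimage_comp, ← Set.image_singleton, Set.preimage_image_eq _ hf]

theorem sum_toReal_measure_preimage_singleton [IsProbabilityMeasure μ] [Fintype S]
    [MeasurableSpace S] [MeasurableSingletonClass S] {W : Ω → S} (hW : Measurable W) :
    ∑ s, (μ (W ⁻¹' {s})).toReal = 1 := by
  simpa [measureReal_def] using sum_measureReal_preimage_singleton (μ := μ) Finset.univ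
    fun s _ => hW (measurableSet_singleton s)

theorem condEnt_comp_right_of_injective (X : Ω → S) (Y : Ω → T) {f : T → U}
    (hf : f.Injective) : condEnt μ X (f ∘ Y) = condEnt μ X Y := by
  unfold condEnt
  rw [ent_comp_of_injective μ Y hf,
    ← ent_comp_of_injective μ (fun ω => (X ω, Y ω)) (Function.injective_id.prodMap hf)]
  rfl

variable [IsProbabilityMeasure μ] [Fintype S] [Fintype T] [Fintype U]
  [MeasurableSpace S] [MeasurableSpace T] [MeasurableSpace U]
  [MeasurableSingletonClass S] [MeasurableSingletonClass T] [MeasurableSingletonClass U]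

theorem ent_prod_of_indepFun {W : Ω → S} {V : Ω → T} (hW : Measurable W) (hV : Measurable V)
    (h : IndepFun W V μ) : ent μ (fun ω => (W ω, V ω)) = ent μ W + ent μ V := by
  unfold ent
  rw [← add_div, tsum_fintype, tsum_fintype, tsum_fintype, Fintype.sum_prod_type]
  congr 1
  have hmul (s : S) (t : T) : (μ ((fun ω => (W ω, V ω)) ⁻¹' {(s, t)})).toReal
      = (μ (W ⁻¹' {s})).toReal * (μ (V ⁻¹' {t})).toReal := by
    rw [← Set.singleton_prod_singleton, Set.mk_preimage_prod,
      h.measure_inter_preimage_eq_mul _ _ (measurableSet_singleton _) (measurableSet_singleton _),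
      ENNReal.toReal_mul]
  simp_rw [hmul, negMulLog_mul, Finset.sum_add_distrib, ← Finset.sum_mul, ← Finset.mul_sum,
    sum_toReal_measure_preimage_singleton μ hV, ← Finset.sum_mul,
    sum_toReal_measure_preimage_singleton μ hW, one_mul]

theorem condEnt_prod_right_of_indepFun {V : Ω → S} {W : Ω → T} {Z : Ω → U}
    (hV : Measurable V) (hW : Measurable W) (hZ : Measurable Z)
    (h : IndepFun (fun ω => (V ω, W ω)) Z μ) :
    condEnt μ V (fun ω => (W ω, Z ω)) = condEnt μ V W := by
  have hWZ : IndepFun W Z μ := h.comp measurable_snd measurable_id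
  have hassoc :
      ent μ (fun ω => (V ω, W ω, Z ω)) = ent μ (fun ω => ((V ω, W ω), Z ω)) := by
    rw [← ent_comp_of_injective μ _ (Equiv.prodAssoc S T U).injective]
    rfl
  unfold condEnt
  rw [hassoc, ent_prod_of_indepFun μ (hV.prodMk hW) hZ h, ent_prod_of_indepFun μ hW hZ hWZ]
  ring

theorem condEnt_mask_eq [AddGroup U] {V : Ω → S} {M : Ω → U} {W : Ω → T} {Z : Ω → U}
    (hV : Measurable V) (hM : Measurable M) (hW : Measurable W) (hZ : Measurable Z)
    (h : IndepFun (fun ω => (V ω, M ω, W ω)) Z μ) :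
    condEnt μ V (fun ω => (Z ω, Z ω + M ω, W ω)) = condEnt μ V (fun ω => (M ω, W ω)) := by
  have hmask : Function.Injective fun p : (U × T) × U => (p.2, p.2 + p.1.1, p.1.2) :=
    Function.LeftInverse.injective (g := fun q => ((-q.1 + q.2.1, q.2.2), q.1))
      fun p => by simp
  rw [← condEnt_prod_right_of_indepFun μ hV (hM.prodMk hW) hZ h,
    ← condEnt_comp_right_of_injective μ V _ hmask]
  rfl

end Entropy

theorem ZMod.val_sum_natCast_of_sum_lt {ι : Type*} (s : Finset ι) (f : ι → ℕ) {n : ℕ}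
    (h : ∑ i ∈ s, f i < n) : (∑ i ∈ s, (f i : ZMod n)).val = ∑ i ∈ s, f i := by
  rw [← Nat.cast_sum, ZMod.val_cast_of_lt h]

theorem ZMod.injective_val_add_prod {k : ℕ} [NeZero k] {β : Type*} (f : β → ℕ) :
    Function.Injective fun p : ZMod k × β => (p.1.val + f p.2, p.2) := by
  rintro ⟨t, b⟩ ⟨t', b'⟩ h
  simp only [Prod.mk.injEq] at h
  obtain ⟨hval, rfl⟩ := h
  simpa using ZMod.val_injective _ (Nat.add_right_cancel hval)

theorem sum_val_eq_val_natCast_sum_castSucc_add_val_last {n : ℕ} (a : Fin (n + 1) → ZMod 2) :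
    ∑ i, (a i).val =
      (∑ i : Fin n, ((a i.castSucc).val : ZMod (n + 1))).val + (a (Fin.last n)).val := by
  have hbits : ∑ i : Fin n, (a i.castSucc).val < n + 1 := Nat.lt_succ_of_le <| by
    simpa using Finset.sum_le_card_nsmul (Finset.univ : Finset (Fin n)) _ 1
      fun i _ => Nat.le_of_lt_succ (ZMod.val_lt _)
  rw [Fin.sum_univ_castSucc, ZMod.val_sum_natCast_of_sum_lt _ _ hbits]

/-- In the ring protocol for modular summation, party `P₃`'s view
`(Z, Z + X₁ + ⋯ + X_{m-1} mod m)` together with `X_m` reveals no more about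
`(X₁, …, X_{m-1})` than the integer sum `S = X₁ + ⋯ + X_m` does. -/
theorem stmt_6 {Ω : Type*} [MeasurableSpace Ω] (μ : Measure Ω)
    [IsProbabilityMeasure μ] (m : ℕ) (hm : 2 ≤ m)
    (X : Fin m → Ω → ZMod 2) (Z : Ω → ZMod m)
    (hXmeas : ∀ i, Measurable (X i)) (hZmeas : Measurable Z)
    (hZindep : IndepFun (fun ω i => X i ω) Z μ) :
    condEnt μ
      (fun ω => fun i : Fin (m-1) => X (Fin.castLE (Nat.sub_le m 1) i) ω)
      (fun ω => (Z ω,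
        Z ω + ∑ i : Fin (m-1), (((X (Fin.castLE (Nat.sub_le m 1) i) ω).val : ℕ) : ZMod m),
        X ⟨m-1, Nat.sub_lt (by omega) one_pos⟩ ω))
    = condEnt μ
      (fun ω => fun i : Fin (m-1) => X (Fin.castLE (Nat.sub_le m 1) i) ω)
      (fun ω => (∑ i : Fin m, (X i ω).val, X ⟨m-1, Nat.sub_lt (by omega) one_pos⟩ ω)) := by
  obtain ⟨n, rfl⟩ : ∃ n, m = n + 1 := ⟨m - 1, by omega⟩
  let V : Ω → Fin n → ZMod 2 := fun ω i => X i.castSucc ω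
  let M : Ω → ZMod (n + 1) := fun ω => ∑ i, ((V ω i).val : ZMod (n + 1))
  have hV : Measurable V := measurable_pi_lambda _ fun i => hXmeas _
  have hM : Measurable M :=
    (measurable_of_countable fun a : Fin n → ZMod 2 => ∑ i, ((a i).val : ZMod (n + 1))).comp hV
  have hindep : IndepFun (fun ω => (V ω, M ω, X (Fin.last n) ω)) Z μ :=
    hZindep.comp (measurable_of_countable fun x : Fin (n + 1) → ZMod 2 =>
      (fun i : Fin n => x i.castSucc, ∑ i : Fin n, ((x i.castSucc).val : ZMod (n + 1)),
        x (Fin.last n))) measurable_id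
  calc condEnt μ V (fun ω => (Z ω, Z ω + M ω, X (Fin.last n) ω))
      = condEnt μ V (fun ω => (M ω, X (Fin.last n) ω)) :=
        condEnt_mask_eq μ hV hM (hXmeas _) hZmeas hindep
    _ = condEnt μ V (fun ω => (∑ i, (X i ω).val, X (Fin.last n) ω)) := by
        rw [← condEnt_comp_right_of_injective μ V _
          (ZMod.injective_val_add_prod (k := n + 1) fun l : ZMod 2 => l.val)]
        simp only [Function.comp_def, sum_val_eq_val_natCast_sum_castSucc_add_val_last]
        rfl
end

section
/- Let (Xⁿ,Yⁿ) be an i.i.d. sequence of pairs of bits with per-symbol distribution μ, and suppose any estimator (X̂ⁿ,Ŷⁿ) of (Xⁿ,Yⁿ) is a function of a message Mₙ taking at most 2^{2nH(X⊕Y)+o(n)} values. If H(X,Y) − 2H(X⊕Y) > 0, then lim inf P{(X̂ⁿ,Ŷⁿ) ≠ (Xⁿ,Yⁿ)} > 0. -/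
open MeasureTheory ProbabilityTheory Real Filter

/-!
Let `Z = (X, Y)` and let `f z = -log₂ P(Z₀ = z)` be the self-information, whose mean is
`H(X,Y)`. Fix `2 H(X⊕Y) < t < H(X,Y)`. By the law of large numbers the atypical event
`∑_{i<n} f (Zᵢ) < n t` has vanishing probability. Off it, a correct estimate means that `Zⁿ`
is one of the at most `K n` sequences `est n m` with `∑ f ≥ n t`, and each of them has
probability `∏ 2^{-f} ≤ 2^{-n t}`. So the estimate is correct with probability at most
`o(1) + K n 2^{-n t} → 0`: the error probability even tends to `1`.
-/

open Topology

section SelfInformation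

variable {Ω S : Type*} [MeasurableSpace Ω] {μ : Measure Ω}

/-- `-log₂ P(Z = s)`; as `logb 2 0 = 0`, it is `0` on null values, which carry no weight. -/
noncomputable def selfInfo (μ : Measure Ω) (Z : Ω → S) (s : S) : ℝ :=
  -logb 2 (μ.real (Z ⁻¹' {s}))

theorem ent_eq_sum_mul_selfInfo [Fintype S] (Z : Ω → S) :
    ent μ Z = ∑ s, μ.real (Z ⁻¹' {s}) * selfInfo μ Z s := by
  rw [ent, tsum_fintype, Finset.sum_div]
  refine Finset.sum_congr rfl fun s _ => ?_
  rw [selfInfo, Real.negMulLog, Real.logb, Measure.real]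
  ring

theorem integral_comp_eq_sum [IsFiniteMeasure μ] [Fintype S] [MeasurableSpace S]
    [MeasurableSingletonClass S] {Z : Ω → S} (hZ : AEMeasurable Z μ) (f : S → ℝ) :
    ∫ ω, f (Z ω) ∂μ = ∑ s, μ.real (Z ⁻¹' {s}) * f s := by
  rw [← integral_map hZ (measurable_of_finite f).aestronglyMeasurable,
    integral_fintype (.of_finite)]
  refine Finset.sum_congr rfl fun s _ => ?_
  rw [smul_eq_mul, Measure.real, Measure.map_apply_of_aemeasurable hZ (measurableSet_singleton s),
    Measure.real]

theorem integral_selfInfo_eq_ent [IsFiniteMeasure μ] [Fintype S] [MeasurableSpace S]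
    [MeasurableSingletonClass S] {Z : Ω → S} (hZ : AEMeasurable Z μ) :
    ∫ ω, selfInfo μ Z (Z ω) ∂μ = ent μ Z := by
  rw [integral_comp_eq_sum hZ, ent_eq_sum_mul_selfInfo]

theorem measureReal_preimage_le_rpow_neg_selfInfo (Z : Ω → S) (s : S) :
    μ.real (Z ⁻¹' {s}) ≤ 2 ^ (-selfInfo μ Z s) := by
  rcases measureReal_nonneg.eq_or_lt with h | h
  · rw [← h]
    positivity
  · rw [selfInfo, neg_neg, rpow_logb two_pos (by norm_num) h]

end SelfInformation

section LimitTheorems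

variable {Ω : Type*} [MeasurableSpace Ω] {μ : Measure Ω}

theorem tendsto_measureReal_sum_range_lt_zero [IsFiniteMeasure μ] {W : ℕ → Ω → ℝ}
    (hint : Integrable (W 0) μ) (hindep : Pairwise fun i j => IndepFun (W i) (W j) μ)
    (hident : ∀ i, IdentDistrib (W i) (W 0) μ μ) {t : ℝ} (ht : t < μ[W 0]) :
    Tendsto (fun n : ℕ => μ.real {ω | ∑ i ∈ Finset.range n, W i ω < n * t}) atTop
      (𝓝 0) := by
  have hmeas : ∀ n : ℕ, AEStronglyMeasurable
      (fun ω => (n : ℝ)⁻¹ • ∑ i ∈ Finset.range n, W i ω) μ := fun n =>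
    (Finset.aestronglyMeasurable_fun_sum _ fun i _ =>
      (hident i).aemeasurable_fst.aestronglyMeasurable).fun_const_smul _
  have hdev := tendstoInMeasure_iff_dist.1
    (tendstoInMeasure_of_tendsto_ae hmeas (strong_law_ae W hint hindep hident)) _ (sub_pos.2 ht)
  refine squeeze_zero (fun _ => measureReal_nonneg) (fun n => measureReal_mono ?_)
    ((ENNReal.tendsto_toReal ENNReal.zero_ne_top).comp hdev)
  intro ω (hω : ∑ i ∈ Finset.range n, W i ω < n * t)
  rcases n.eq_zero_or_pos with rfl | hn
  · simp at hω
  have havg : (n : ℝ)⁻¹ • ∑ i ∈ Finset.range n, W i ω < t := by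
    rw [smul_eq_mul, inv_mul_lt_iff₀ (Nat.cast_pos.2 hn)]
    exact hω
  change μ[W 0] - t ≤ dist _ _
  rw [dist_comm, Real.dist_eq]
  exact (sub_le_sub_left havg.le _).trans (le_abs_self _)

theorem tendsto_mul_two_rpow_neg_mul_zero {K o : ℕ → ℝ} {a t : ℝ} (hat : a < t)
    (ho : o =o[atTop] (fun n => (n : ℝ))) (hK₀ : ∀ n, 0 ≤ K n)
    (hK : ∀ n, K n ≤ 2 ^ (a * n + o n)) :
    Tendsto (fun n => K n * 2 ^ (-(n * t))) atTop (𝓝 0) := by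
  have hδ : 0 < (t - a) / 2 := half_pos (sub_pos.2 hat)
  have hexp : Tendsto (fun n : ℕ => o n - (t - a) * n) atTop atBot := by
    refine tendsto_atBot_mono' atTop ?_
      (tendsto_neg_atTop_atBot.comp (tendsto_natCast_atTop_atTop.const_mul_atTop hδ))
    filter_upwards [ho.def hδ] with n hn
    rw [Real.norm_eq_abs, Real.norm_natCast] at hn
    have := (le_abs_self _).trans hn
    simp only [Function.comp_apply]
    linarith
  refine squeeze_zero (fun n => mul_nonneg (hK₀ n) (by positivity)) (fun n => ?_)
    ((tendsto_rpow_atBot_of_base_gt_one 2 one_lt_two).comp hexp)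
  calc K n * 2 ^ (-(n * t)) ≤ 2 ^ (a * n + o n) * 2 ^ (-(n * t)) := by gcongr; exact hK n
    _ = 2 ^ (o n - (t - a) * n) := by rw [← rpow_add two_pos]; ring_nf

theorem tendsto_measureReal_setOf_not_one [IsProbabilityMeasure μ] {ι : Type*} {l : Filter ι}
    {p : ι → Ω → Prop} (h : Tendsto (fun i => μ.real {ω | p i ω}) l (𝓝 0)) :
    Tendsto (fun i => μ.real {ω | ¬p i ω}) l (𝓝 1) := by
  have hlower : ∀ i, 1 - μ.real {ω | p i ω} ≤ μ.real {ω | ¬p i ω} := fun i => by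
    have hcover : Set.univ = {ω | p i ω} ∪ {ω | ¬p i ω} := by
      ext ω
      simp [em]
    linarith [probReal_univ (μ := μ),
      hcover ▸ measureReal_union_le (μ := μ) {ω | p i ω} {ω | ¬p i ω}]
  refine tendsto_of_tendsto_of_tendsto_of_le_of_le ?_ tendsto_const_nhds hlower
    fun _ => measureReal_le_one
  simpa using h.const_sub 1

end LimitTheorems

section IID

variable {Ω S : Type*} [MeasurableSpace Ω] {μ : Measure Ω} [MeasurableSpace S]
  [MeasurableSingletonClass S] {Z : ℕ → Ω → S}

theorem measureReal_cylinder_eq_prod (hindep : iIndepFun Z μ)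
    (hident : ∀ i, IdentDistrib (Z i) (Z 0) μ μ) {n : ℕ} (z : Fin n → S) :
    μ.real {ω | ∀ i : Fin n, Z i ω = z i} = ∏ i, μ.real (Z 0 ⁻¹' {z i}) := by
  have hcyl : {ω | ∀ i : Fin n, Z i ω = z i} = ⋂ i : Fin n, Z i ⁻¹' {z i} := by
    ext ω
    simp
  rw [Measure.real, hcyl, (hindep.precomp Fin.val_injective).meas_iInter
    fun i => ⟨{z i}, measurableSet_singleton _, rfl⟩, ENNReal.toReal_prod]
  exact Finset.prod_congr rfl fun i _ =>
    congrArg ENNReal.toReal ((hident i).measure_mem_eq (measurableSet_singleton _))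

theorem measureReal_cylinder_le_rpow (hindep : iIndepFun Z μ)
    (hident : ∀ i, IdentDistrib (Z i) (Z 0) μ μ) {n : ℕ} (z : Fin n → S) :
    μ.real {ω | ∀ i : Fin n, Z i ω = z i} ≤ 2 ^ (-∑ i, selfInfo μ (Z 0) (z i)) := by
  rw [measureReal_cylinder_eq_prod hindep hident, ← Finset.sum_neg_distrib,
    rpow_sum_of_pos two_pos]
  exact Finset.prod_le_prod (fun _ _ => measureReal_nonneg)
    fun i _ => measureReal_preimage_le_rpow_neg_selfInfo _ _

theorem measureReal_mem_codebook_le [IsFiniteMeasure μ] (hindep : iIndepFun Z μ)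
    (hident : ∀ i, IdentDistrib (Z i) (Z 0) μ μ) (t : ℝ) {n k : ℕ}
    (g : Fin k → Fin n → S) :
    μ.real {ω | ∃ m, ∀ i : Fin n, Z i ω = g m i} ≤
      μ.real {ω | ∑ i ∈ Finset.range n, selfInfo μ (Z 0) (Z i ω) < n * t}
        + k * 2 ^ (-(n * t)) := by
  classical
  set typical := Finset.univ.filter fun m => n * t ≤ ∑ i, selfInfo μ (Z 0) (g m i)
  have hcover : {ω | ∃ m, ∀ i : Fin n, Z i ω = g m i} ⊆
      {ω | ∑ i ∈ Finset.range n, selfInfo μ (Z 0) (Z i ω) < n * t} ∪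
        ⋃ m ∈ typical, {ω | ∀ i : Fin n, Z i ω = g m i} := by
    rintro ω ⟨m, hm⟩
    by_cases hmt : m ∈ typical
    · exact Or.inr (Set.mem_biUnion hmt hm)
    · left
      rw [Set.mem_ofPred_eq, ← Fin.sum_univ_eq_sum_range (fun i => selfInfo μ (Z 0) (Z i ω))]
      simpa [typical, hm] using hmt
  have hcyl : ∀ m ∈ typical,
      μ.real {ω | ∀ i : Fin n, Z i ω = g m i} ≤ 2 ^ (-(n * t)) := fun m hm =>
    (measureReal_cylinder_le_rpow hindep hident (g m)).trans
      (rpow_le_rpow_of_exponent_le one_le_two (neg_le_neg (Finset.mem_filter.1 hm).2))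
  calc μ.real {ω | ∃ m, ∀ i : Fin n, Z i ω = g m i}
      ≤ μ.real {ω | ∑ i ∈ Finset.range n, selfInfo μ (Z 0) (Z i ω) < n * t} +
          ∑ m ∈ typical, μ.real {ω | ∀ i : Fin n, Z i ω = g m i} :=
        (measureReal_mono hcover).trans ((measureReal_union_le _ _).trans
          (add_le_add_right (measureReal_biUnion_finset_le _ _) _))
    _ ≤ _ := by
        gcongr
        refine (Finset.sum_le_sum hcyl).trans ?_
        rw [Finset.sum_const, nsmul_eq_mul]
        gcongr
        exact_mod_cast (Finset.card_filter_le _ _).trans_eq (Finset.card_fin k)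

theorem tendsto_measureReal_mem_codebook_zero [IsFiniteMeasure μ] [Fintype S]
    (hindep : iIndepFun Z μ) (hident : ∀ i, IdentDistrib (Z i) (Z 0) μ μ) {t : ℝ}
    (ht : t < ent μ (Z 0))
    {K : ℕ → ℕ} (g : (n : ℕ) → Fin (K n) → Fin n → S)
    (hK : Tendsto (fun n => (K n : ℝ) * 2 ^ (-(n * t))) atTop (𝓝 0)) :
    Tendsto (fun n => μ.real {ω | ∃ m, ∀ i : Fin n, Z i ω = g n m i}) atTop (𝓝 0) := by
  have hZ : AEMeasurable (Z 0) μ := (hident 0).aemeasurable_fst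
  have hf : Measurable (selfInfo μ (Z 0)) := measurable_of_finite _
  have hatypical := tendsto_measureReal_sum_range_lt_zero (μ := μ)
    (W := fun i => selfInfo μ (Z 0) ∘ Z i) (Integrable.of_finite.comp_aemeasurable hZ)
    (fun i j hij => (hindep.indepFun hij).comp hf hf) (fun i => (hident i).comp hf)
    (by rwa [Function.comp_def, integral_selfInfo_eq_ent hZ])
  refine squeeze_zero (fun _ => measureReal_nonneg)
    (fun n => measureReal_mem_codebook_le hindep hident t (g n)) ?_
  simpa using hatypical.add hK

end IID

theorem stmt_11_general {Ω : Type*} [MeasurableSpace Ω] (μ : Measure Ω)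
    [IsProbabilityMeasure μ]
    (X Y : ℕ → Ω → ZMod 2)
    (hiid : iIndepFun (fun i ω => (X i ω, Y i ω)) μ)
    (hident : ∀ i, IdentDistrib (fun ω => (X i ω, Y i ω))
      (fun ω => (X 0 ω, Y 0 ω)) μ μ)
    (K : ℕ → ℕ)
    (M : (n : ℕ) → Ω → Fin (K n))
    (est : (n : ℕ) → Fin (K n) → (Fin n → ZMod 2) × (Fin n → ZMod 2))
    (o : ℕ → ℝ) (ho : o =o[Filter.atTop] (fun n => (n : ℝ)))
    (hK : ∀ n, (K n : ℝ) ≤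
      2 ^ (2 * n * ent μ (fun ω => X 0 ω + Y 0 ω) + o n))
    (hcorr : ent μ (fun ω => (X 0 ω, Y 0 ω))
      - 2 * ent μ (fun ω => X 0 ω + Y 0 ω) > 0) :
    0 < Filter.atTop.liminf (fun n =>
      (μ {ω | est n (M n ω) ≠
        ((fun i : Fin n => X i ω), (fun i : Fin n => Y i ω))}).toReal) := by
  obtain ⟨t, hxor, ht⟩ := exists_between (sub_pos.1 hcorr)
  have hrate : Tendsto (fun n => (K n : ℝ) * 2 ^ (-(n * t))) atTop (𝓝 0) :=
    tendsto_mul_two_rpow_neg_mul_zero hxor ho (fun n => (K n).cast_nonneg)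
      fun n => (hK n).trans_eq (by rw [mul_right_comm])
  have hcodebook := tendsto_measureReal_mem_codebook_zero hiid hident ht
    (fun n m i => ((est n m).1 i, (est n m).2 i)) hrate
  have hcorrect : Tendsto (fun n => μ.real {ω | est n (M n ω) =
      ((fun i : Fin n => X i ω), (fun i : Fin n => Y i ω))}) atTop (𝓝 0) := by
    refine squeeze_zero (fun _ => measureReal_nonneg) (fun n => measureReal_mono ?_) hcodebook
    exact fun ω (hω : est n (M n ω) = _) => ⟨M n ω, fun i => by rw [hω]⟩
  exact one_pos.trans_eq (tendsto_measureReal_setOf_not_one hcorrect).liminf_eq.symm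

/-- Converse for the discrete memoryless setting: if `(Xⁿ,Yⁿ)` is i.i.d. with
`H(X,Y) − 2·H(X⊕Y) > 0` and any estimator of `(Xⁿ,Yⁿ)` is a function of a
message with at most `2^{2nH(X⊕Y)+o(n)}` values, then the error probability
stays bounded away from `0`. -/
theorem stmt_11 {Ω : Type*} [MeasurableSpace Ω] (μ : Measure Ω)
    [IsProbabilityMeasure μ]
    (X Y : ℕ → Ω → ZMod 2)
    (hmeas : ∀ i, Measurable (X i) ∧ Measurable (Y i))
    (hiid : iIndepFun (fun i ω => (X i ω, Y i ω)) μ)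
    (hident : ∀ i, IdentDistrib (fun ω => (X i ω, Y i ω))
      (fun ω => (X 0 ω, Y 0 ω)) μ μ)
    (K : ℕ → ℕ)
    (M : (n : ℕ) → Ω → Fin (K n))
    (est : (n : ℕ) → Fin (K n) → (Fin n → ZMod 2) × (Fin n → ZMod 2))
    (o : ℕ → ℝ) (ho : o =o[Filter.atTop] (fun n => (n : ℝ)))
    (hK : ∀ n, (K n : ℝ) ≤
      2 ^ (2 * n * ent μ (fun ω => X 0 ω + Y 0 ω) + o n))
    (hcorr : ent μ (fun ω => (X 0 ω, Y 0 ω))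
      - 2 * ent μ (fun ω => X 0 ω + Y 0 ω) > 0) :
    0 < Filter.atTop.liminf (fun n =>
      (μ {ω | est n (M n ω) ≠
        ((fun i : Fin n => X i ω), (fun i : Fin n => Y i ω))}).toReal) :=
  stmt_11_general μ X Y hiid hident K M est o ho hK hcorr
end
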